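/- Let ε ∈ (0,1] and let S(x) = 6x⁴(1 − ε V(x/x₁)) for 0 ≤ x < x₁ and S(x) = 6x⁴ for x ≥ x₁, where x₁ = (3/5)^{1/8} and V(θ) = (7θ² − 3)(θ² − 1)³/3. Then S is nonnegative, nondecreasing, convex with respect to the logarithm, satisfies ∫₀¹ S(tx) x dx ≤ t⁴ for all t ≥ 0, and yet ∫₀^∞ S(t) t⁷/(1+t⁸)² dt > 3π/8. Hence S is a counterexample to Khabibullin's original conjecture with n = 2, λ = 4. -/

import Mathlib

/-!
Write `S ε x = 6 x₁⁴ · profile ε (x / x₁)`. The profile and `θ ↦ θ · profile' θ` are `C¹` across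
`θ = 1`, and on `[0, 1]` their derivatives are `4θ³ (1 - ε P(θ²))` and `16θ³ (1 - ε R(θ²))`,
where `P u = (u - 1)²(7u² - 6u + 1)` and `R u = (u - 1)(21u³ - 29u² + 11u - 1)` are `≤ 1` on
`[0, 1]`; this gives monotonicity of the profile and convexity of `profile ∘ exp`.
The constraint integral is explicit: `θ⁶/6 - ε θ⁶(θ² - 1)⁴/6` is a primitive of `θ · profile θ`
on `[0, 1]`, and the correction term is nonnegative.

For the last integral, `6t¹¹/(1 + t⁸)²` integrates to `3π/8` over `(0, ∞)`, and the perturbation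
contributes `-6ε ∫₀^{x₁} w ψ'` with `w t = t⁶/(1 + t⁸)²` and `ψ t = t⁶(t² - x₁²)⁴/(6x₁⁸) ≥ 0`
vanishing at `0` and `x₁`. Integrating by parts, this is `6ε ∫₀^{x₁} w' ψ > 0`, because
`w' t = t⁵(6 - 10t⁸)/(1 + t⁸)³` is positive exactly for `t⁸ < 3/5 = x₁⁸`.
-/

open MeasureTheory Real

noncomputable def V (θ : ℝ) : ℝ := (7 * θ^2 - 3) * (θ^2 - 1)^3 / 3

noncomputable def x₁ : ℝ := (3/5 : ℝ) ^ ((1:ℝ)/8)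

noncomputable def S (ε x : ℝ) : ℝ :=
  if x < x₁ then 6 * x^4 * (1 - ε * V (x / x₁)) else 6 * x^4

open Set Filter Topology

theorem hasDerivAt_ite_lt {f g f' g' : ℝ → ℝ} {a : ℝ}
    (hf : ∀ x, HasDerivAt f (f' x) x) (hg : ∀ x, HasDerivAt g (g' x) x)
    (ha : f a = g a) (ha' : f' a = g' a) (x : ℝ) :
    HasDerivAt (fun x => if x < a then f x else g x) (if x < a then f' x else g' x) x := by
  rcases lt_trichotomy x a with hx | rfl | hx
  · rw [if_pos hx]
    refine (hf x).congr_of_eventuallyEq ?_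
    filter_upwards [Iio_mem_nhds hx] with y (hy : y < a)
    rw [if_pos hy]
  · rw [if_neg (lt_irrefl x)]
    have hIic : HasDerivWithinAt (fun y => if y < x then f y else g y) (g' x) (Iic x) x := by
      refine ((hf x).hasDerivWithinAt.congr (fun y hy => ?_) (by simp [ha])).congr_deriv ha'
      rcases (mem_Iic.mp hy).lt_or_eq with hy | rfl
      · rw [if_pos hy]
      · rw [if_neg (lt_irrefl y), ha]
    have hIci : HasDerivWithinAt (fun y => if y < x then f y else g y) (g' x) (Ici x) x :=
      (hg x).hasDerivWithinAt.congr (fun y hy => if_neg (not_lt.mpr hy)) (if_neg (lt_irrefl x))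
    simpa [Iic_union_Ici] using hIic.union hIci
  · rw [if_neg (not_lt.mpr hx.le)]
    refine (hg x).congr_of_eventuallyEq ?_
    filter_upwards [Ioi_mem_nhds hx] with y (hy : a < y)
    rw [if_neg (not_lt.mpr (le_of_lt hy))]

theorem monotoneOn_Ici_of_hasDerivAt_nonneg {f f' : ℝ → ℝ} {a : ℝ}
    (hf : ∀ x, HasDerivAt f (f' x) x) (hf' : ∀ x, a < x → 0 ≤ f' x) : MonotoneOn f (Ici a) :=
  monotoneOn_of_hasDerivWithinAt_nonneg (convex_Ici a)
    (fun x _ => (hf x).continuousAt.continuousWithinAt) (fun x _ => (hf x).hasDerivWithinAt)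
    (by simpa using hf')

theorem convexOn_univ_comp_exp {f f' : ℝ → ℝ} (hf : ∀ x, HasDerivAt f (f' x) x)
    (hmono : MonotoneOn (fun x => x * f' x) (Ioi 0)) : ConvexOn ℝ univ (f ∘ exp) := by
  have hderiv (s : ℝ) : HasDerivAt (f ∘ exp) (exp s * f' (exp s)) s :=
    ((hf (exp s)).comp s (hasDerivAt_exp s)).congr_deriv (mul_comm _ _)
  refine Monotone.convexOn_univ_of_deriv (fun s => (hderiv s).differentiableAt) fun s t hst => ?_
  rw [(hderiv s).deriv, (hderiv t).deriv]
  exact hmono (exp_pos s) (exp_pos t) (exp_le_exp.mpr hst)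

theorem integral_mul_deriv_neg {u v u' v' : ℝ → ℝ} {a b : ℝ} (hab : a < b)
    (hu : ∀ x ∈ Icc a b, HasDerivAt u (u' x) x) (hv : ∀ x ∈ Icc a b, HasDerivAt v (v' x) x)
    (hu' : IntervalIntegrable u' volume a b) (hv' : IntervalIntegrable v' volume a b)
    (hva : v a = 0) (hvb : v b = 0) (hpos : ∀ x ∈ Ioo a b, 0 < u' x * v x) :
    ∫ x in a..b, u x * v' x < 0 := by
  rw [← uIcc_of_le hab.le] at hu hv
  have hvcont : ContinuousOn v (uIcc a b) := fun x hx => (hv x hx).continuousAt.continuousWithinAt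
  rw [intervalIntegral.integral_mul_deriv_eq_deriv_mul hu hv hu' hv', hva, hvb]
  have hint :=
    intervalIntegral.intervalIntegral_pos_of_pos_on (hu'.mul_continuousOn hvcont) hpos hab
  linarith

theorem hasDerivAt_V (θ : ℝ) : HasDerivAt V (8 * θ * (θ^2 - 1)^2 * (7 * θ^2 - 4) / 3) θ := by
  have h := (((hasDerivAt_pow 2 θ).const_mul 7).sub_const 3).fun_mul
    (((hasDerivAt_pow 2 θ).sub_const 1).fun_pow 3) |>.div_const 3
  exact h.congr_deriv (by push_cast; ring)

noncomputable def profile (ε θ : ℝ) : ℝ := if θ < 1 then θ^4 * (1 - ε * V θ) else θ^4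

noncomputable def profileDeriv (ε θ : ℝ) : ℝ :=
  if θ < 1 then 4 * θ^3 * (1 - ε * ((θ^2 - 1)^2 * (7 * θ^4 - 6 * θ^2 + 1))) else 4 * θ^3

theorem hasDerivAt_profile (ε θ : ℝ) : HasDerivAt (profile ε) (profileDeriv ε θ) θ := by
  have hpoly (θ : ℝ) : HasDerivAt (fun θ => θ^4 * (1 - ε * V θ))
      (4 * θ^3 * (1 - ε * ((θ^2 - 1)^2 * (7 * θ^4 - 6 * θ^2 + 1)))) θ :=
    ((hasDerivAt_pow 4 θ).fun_mul (((hasDerivAt_V θ).const_mul ε).const_sub 1)).congr_deriv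
      (by unfold V; push_cast; ring)
  have hpow (θ : ℝ) : HasDerivAt (fun θ : ℝ => θ^4) (4 * θ^3) θ := by
    simpa using hasDerivAt_pow 4 θ
  exact hasDerivAt_ite_lt hpoly hpow (by norm_num [V]) (by norm_num) θ

theorem sq_sub_one_sq_mul_le_one {θ : ℝ} (hθ : θ^2 ≤ 1) :
    (θ^2 - 1)^2 * (7 * θ^4 - 6 * θ^2 + 1) ≤ 1 := by
  nlinarith [mul_nonneg (sq_nonneg θ) (mul_nonneg (sub_nonneg.mpr hθ)
    (by nlinarith [sq_nonneg (14 * θ^2 - 13)] : (0:ℝ) ≤ 7 * θ^4 - 13 * θ^2 + 7))]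

theorem profileDeriv_nonneg {ε θ : ℝ} (hε0 : 0 ≤ ε) (hε1 : ε ≤ 1) (hθ : 0 ≤ θ) :
    0 ≤ profileDeriv ε θ := by
  unfold profileDeriv
  split_ifs with h
  · have hP := (mul_le_of_le_one_right hε0
      (sq_sub_one_sq_mul_le_one (θ := θ) (by nlinarith))).trans hε1
    exact mul_nonneg (by positivity) (sub_nonneg.mpr hP)
  · positivity

theorem profile_monotoneOn {ε : ℝ} (hε0 : 0 ≤ ε) (hε1 : ε ≤ 1) : MonotoneOn (profile ε) (Ici 0) :=
  monotoneOn_Ici_of_hasDerivAt_nonneg (hasDerivAt_profile ε)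
    fun _ hθ => profileDeriv_nonneg hε0 hε1 hθ.le

theorem sq_sub_one_mul_le_one {θ : ℝ} (hθ : θ^2 ≤ 1) :
    (θ^2 - 1) * (21 * θ^6 - 29 * θ^4 + 11 * θ^2 - 1) ≤ 1 := by
  nlinarith [mul_nonneg (sq_nonneg θ) (mul_nonneg (sub_nonneg.mpr hθ)
    (by nlinarith [sq_nonneg (42 * θ^2 - 29)] : (0:ℝ) ≤ 21 * θ^4 - 29 * θ^2 + 11))]

theorem hasDerivAt_mul_profileDeriv (ε θ : ℝ) :
    HasDerivAt (fun θ => θ * profileDeriv ε θ)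
      (if θ < 1 then 16 * θ^3 * (1 - ε * ((θ^2 - 1) * (21 * θ^6 - 29 * θ^4 + 11 * θ^2 - 1)))
        else 16 * θ^3) θ := by
  have hpoly (θ : ℝ) : HasDerivAt
      (fun θ => θ * (4 * θ^3 * (1 - ε * ((θ^2 - 1)^2 * (7 * θ^4 - 6 * θ^2 + 1)))))
      (16 * θ^3 * (1 - ε * ((θ^2 - 1) * (21 * θ^6 - 29 * θ^4 + 11 * θ^2 - 1)))) θ :=
    ((hasDerivAt_id' θ).fun_mul (((hasDerivAt_pow 3 θ).const_mul 4).fun_mul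
      (((((hasDerivAt_pow 2 θ).sub_const 1).fun_pow 2).fun_mul
        ((((hasDerivAt_pow 4 θ).const_mul 7).fun_sub
          ((hasDerivAt_pow 2 θ).const_mul 6)).add_const 1)
        |>.const_mul ε).const_sub 1))).congr_deriv (by push_cast; ring)
  have hpow (θ : ℝ) : HasDerivAt (fun θ : ℝ => θ * (4 * θ^3)) (16 * θ^3) θ :=
    ((hasDerivAt_pow 4 θ).const_mul 4).congr_of_eventuallyEq (.of_forall fun θ => by ring)
      |>.congr_deriv (by push_cast; ring)
  have h := hasDerivAt_ite_lt (a := 1) hpoly hpow (by norm_num) (by norm_num) θ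
  simp only [profileDeriv, mul_ite]
  exact h

theorem monotoneOn_mul_profileDeriv {ε : ℝ} (hε0 : 0 ≤ ε) (hε1 : ε ≤ 1) :
    MonotoneOn (fun θ => θ * profileDeriv ε θ) (Ici 0) := by
  refine monotoneOn_Ici_of_hasDerivAt_nonneg (hasDerivAt_mul_profileDeriv ε) fun θ hθ => ?_
  split_ifs with h
  · have hR := (mul_le_of_le_one_right hε0
      (sq_sub_one_mul_le_one (θ := θ) (by nlinarith))).trans hε1
    exact mul_nonneg (by positivity) (sub_nonneg.mpr hR)
  · positivity

theorem convexOn_profile_comp_exp {ε : ℝ} (hε0 : 0 ≤ ε) (hε1 : ε ≤ 1) :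
    ConvexOn ℝ univ (profile ε ∘ exp) :=
  convexOn_univ_comp_exp (hasDerivAt_profile ε)
    ((monotoneOn_mul_profileDeriv hε0 hε1).mono Ioi_subset_Ici_self)

noncomputable def momentV (θ : ℝ) : ℝ := θ^6 * (θ^2 - 1)^4 / 6

theorem hasDerivAt_momentV (θ : ℝ) : HasDerivAt momentV (θ^5 * V θ) θ :=
  ((hasDerivAt_pow 6 θ).fun_mul (((hasDerivAt_pow 2 θ).sub_const 1).fun_pow 4) |>.div_const 6)
    |>.congr_deriv (by unfold V; push_cast; ring)

noncomputable def profileMoment (ε θ : ℝ) : ℝ :=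
  if θ < 1 then θ^6 / 6 - ε * momentV θ else θ^6 / 6

theorem hasDerivAt_profileMoment (ε θ : ℝ) :
    HasDerivAt (profileMoment ε) (θ * profile ε θ) θ := by
  have hpoly (θ : ℝ) :
      HasDerivAt (fun θ => θ^6 / 6 - ε * momentV θ) (θ * (θ^4 * (1 - ε * V θ))) θ :=
    (((hasDerivAt_pow 6 θ).div_const 6).fun_sub ((hasDerivAt_momentV θ).const_mul ε)).congr_deriv
      (by push_cast; ring)
  have hpow (θ : ℝ) : HasDerivAt (fun θ : ℝ => θ^6 / 6) (θ * θ^4) θ :=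
    ((hasDerivAt_pow 6 θ).div_const 6).congr_deriv (by push_cast; ring)
  have h := hasDerivAt_ite_lt (a := 1) hpoly hpow (by norm_num [momentV]) (by norm_num [V]) θ
  simp only [profile, mul_ite]
  exact h

theorem integral_profile_mul_mul_sq (ε u : ℝ) :
    ∫ x in (0:ℝ)..1, profile ε (u * x) * x * u^2 = profileMoment ε u := by
  have hderiv (x : ℝ) :
      HasDerivAt (fun x => profileMoment ε (u * x)) (profile ε (u * x) * x * u^2) x :=
    ((hasDerivAt_profileMoment ε (u * x)).comp x ((hasDerivAt_id' x).const_mul u)).congr_deriv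
      (by ring)
  have hcont : Continuous (profile ε) := continuous_iff_continuousAt.mpr fun θ =>
    (hasDerivAt_profile ε θ).continuousAt
  rw [intervalIntegral.integral_eq_sub_of_hasDerivAt (fun x _ => hderiv x)
    (by apply Continuous.intervalIntegrable; fun_prop)]
  norm_num [profileMoment, momentV]

theorem integral_profile_mul_le {ε u : ℝ} (hε0 : 0 ≤ ε) (hu : 0 ≤ u) :
    ∫ x in (0:ℝ)..1, profile ε (u * x) * x ≤ u^4 / 6 := by
  rcases hu.eq_or_lt with rfl | hu
  · norm_num [profile]
  have hmoment : profileMoment ε u ≤ u^6 / 6 := by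
    unfold profileMoment momentV
    split_ifs
    · have : 0 ≤ ε * (u^6 * (u^2 - 1)^4 / 6) := by positivity
      linarith
    · rfl
  rw [← integral_profile_mul_mul_sq, intervalIntegral.integral_mul_const] at hmoment
  have hu2 : 0 < u^2 := by positivity
  calc _ ≤ u^6 / 6 / u^2 := (le_div_iff₀ hu2).mpr hmoment
    _ = u^4 / 6 := by field_simp

theorem x₁_pos : 0 < x₁ := rpow_pos_of_pos (by norm_num) _

theorem S_eq_profile (ε x : ℝ) : S ε x = 6 * x₁^4 * profile ε (x / x₁) := by
  have hx₁ := x₁_pos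
  simp only [S, profile, div_lt_one hx₁]
  split_ifs <;> field_simp

theorem S_monotoneOn {ε : ℝ} (hε0 : 0 ≤ ε) (hε1 : ε ≤ 1) : MonotoneOn (S ε) (Ici 0) := by
  have hx₁ := x₁_pos
  intro x hx y hy hxy
  rw [S_eq_profile, S_eq_profile]
  gcongr
  exact profile_monotoneOn hε0 hε1 (div_nonneg hx hx₁.le) (div_nonneg hy hx₁.le)
    (div_le_div_of_nonneg_right hxy hx₁.le)

theorem convexOn_S_comp_exp {ε : ℝ} (hε0 : 0 ≤ ε) (hε1 : ε ≤ 1) :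
    ConvexOn ℝ univ (fun s => S ε (exp s)) := by
  have hx₁ := x₁_pos
  have h := ((convexOn_profile_comp_exp hε0 hε1).translate_right (-log x₁)).smul
    (by positivity : (0:ℝ) ≤ 6 * x₁^4)
  rw [preimage_univ] at h
  refine h.congr fun s _ => ?_
  simp only [Function.comp_apply, smul_eq_mul, S_eq_profile, exp_add, exp_neg, exp_log hx₁]
  ring_nf

theorem integral_S_mul_le {ε t : ℝ} (hε0 : 0 ≤ ε) (ht : 0 ≤ t) :
    ∫ x in (0:ℝ)..1, S ε (t * x) * x ≤ t^4 := by
  have hx₁ := x₁_pos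
  have hrw (x : ℝ) : S ε (t * x) * x = 6 * x₁^4 * (profile ε (t / x₁ * x) * x) := by
    rw [S_eq_profile, mul_div_right_comm]
    ring
  calc ∫ x in (0:ℝ)..1, S ε (t * x) * x
      = 6 * x₁^4 * ∫ x in (0:ℝ)..1, profile ε (t / x₁ * x) * x := by
        simp_rw [hrw]
        exact intervalIntegral.integral_const_mul _ _
    _ ≤ 6 * x₁^4 * ((t / x₁)^4 / 6) := by
        gcongr
        exact integral_profile_mul_le hε0 (div_nonneg ht hx₁.le)
    _ = t^4 := by field_simp

theorem hasDerivAt_arctan_pow_four (t : ℝ) :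
    HasDerivAt (fun t => 3/4 * (arctan (t^4) - t^4 / (1 + t^8))) (6 * t^11 / (1 + t^8)^2) t := by
  have h1 : (1 : ℝ) + t^8 ≠ 0 := by positivity
  have h2 : (1 : ℝ) + (t^4)^2 ≠ 0 := by positivity
  refine ((((hasDerivAt_pow 4 t).arctan).fun_sub ((hasDerivAt_pow 4 t).fun_div
    ((hasDerivAt_pow 8 t).const_add 1) h1)).const_mul (3/4)).congr_deriv ?_
  field_simp
  ring

theorem tendsto_arctan_pow_four :
    Tendsto (fun t => 3/4 * (arctan (t^4) - t^4 / (1 + t^8))) atTop (𝓝 (3 * π / 8)) := by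
  have hpow : Tendsto (fun t : ℝ => t^4) atTop atTop := tendsto_pow_atTop (by norm_num)
  have harctan := (tendsto_arctan_atTop.mono_right nhdsWithin_le_nhds).comp hpow
  have hfrac : Tendsto (fun t : ℝ => t^4 / (1 + t^8)) atTop (𝓝 0) := by
    refine tendsto_of_tendsto_of_tendsto_of_le_of_le' tendsto_const_nhds
      (tendsto_inv_atTop_zero.comp hpow) (.of_forall fun t => by positivity) ?_
    filter_upwards [eventually_gt_atTop 0] with t ht
    rw [Function.comp_apply, div_le_iff₀ (by positivity)]
    field_simp
    nlinarith [pow_pos ht 8]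
  rw [show 3 * π / 8 = 3/4 * (π / 2 - 0) by ring]
  exact (harctan.sub hfrac).const_mul (3/4)

theorem integrableOn_Ioi_pow_eleven_div :
    IntegrableOn (fun t => 6 * t^11 / (1 + t^8)^2) (Ioi (0:ℝ)) :=
  integrableOn_Ioi_deriv_of_nonneg' (fun t _ => hasDerivAt_arctan_pow_four t)
    (fun t ht => by have : (0:ℝ) < t := ht; positivity) tendsto_arctan_pow_four

theorem integral_Ioi_pow_eleven_div :
    ∫ t in Ioi (0:ℝ), 6 * t^11 / (1 + t^8)^2 = 3 * π / 8 := by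
  rw [integral_Ioi_of_hasDerivAt_of_nonneg' (fun t _ => hasDerivAt_arctan_pow_four t)
    (fun t ht => by have : (0:ℝ) < t := ht; positivity) tendsto_arctan_pow_four]
  norm_num

theorem x₁_pow_eight : x₁^8 = 3/5 := by
  rw [x₁, ← rpow_natCast, ← rpow_mul (by norm_num)]
  norm_num

theorem hasDerivAt_weight (t : ℝ) :
    HasDerivAt (fun t => t^6 / (1 + t^8)^2) (t^5 * (6 - 10 * t^8) / (1 + t^8)^3) t := by
  have h : (1 : ℝ) + t^8 ≠ 0 := by positivity
  refine ((hasDerivAt_pow 6 t).fun_div (((hasDerivAt_pow 8 t).const_add 1).fun_pow 2)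
    (pow_ne_zero 2 h)).congr_deriv ?_
  field_simp
  ring

theorem integral_weight_mul_V_neg :
    ∫ t in (0:ℝ)..x₁, t^6 / (1 + t^8)^2 * (t^5 * V (t / x₁)) < 0 := by
  have hx₁ := x₁_pos
  have hψ (t : ℝ) : HasDerivAt (fun t => x₁^6 * momentV (t / x₁)) (t^5 * V (t / x₁)) t :=
    (((hasDerivAt_momentV (t / x₁)).comp t ((hasDerivAt_id' t).div_const x₁)).const_mul (x₁^6))
      |>.congr_deriv (by field_simp)
  refine integral_mul_deriv_neg hx₁ (fun t _ => hasDerivAt_weight t) (fun t _ => hψ t)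
    ?_ ?_ (by simp [momentV])
    (by simp [div_self hx₁.ne', momentV]) fun t ⟨ht0, ht1⟩ => ?_
  · refine Continuous.intervalIntegrable ((by fun_prop : Continuous _).div (by fun_prop)
      fun t => by positivity) _ _
  · apply Continuous.intervalIntegrable
    unfold V
    fun_prop
  · have hθ : t / x₁ < 1 := (div_lt_one hx₁).mpr ht1
    have ht8 : t^8 < 3/5 := x₁_pow_eight ▸ pow_lt_pow_left₀ ht1 ht0.le (by norm_num)
    have hθ0 : 0 < t / x₁ := div_pos ht0 hx₁
    have hmoment : 0 < momentV (t / x₁) :=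
      div_pos (mul_pos (pow_pos hθ0 6) (Even.pow_pos (by decide) (by nlinarith))) (by norm_num)
    have hweight : 0 < t^5 * (6 - 10 * t^8) / (1 + t^8)^3 := by
      have : 0 < 6 - 10 * t^8 := by linarith
      positivity
    positivity

theorem three_pi_div_eight_lt_integral_S {ε : ℝ} (hε : 0 < ε) :
    3 * π / 8 < ∫ t in Ioi (0:ℝ), S ε t * t^7 / (1 + t^8)^2 := by
  set g : ℝ → ℝ := fun t => t^6 / (1 + t^8)^2 * (t^5 * V (t / x₁))
  have hsplit (t : ℝ) : S ε t * t^7 / (1 + t^8)^2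
      = 6 * t^11 / (1 + t^8)^2 - 6 * ε * (Iio x₁).indicator g t := by
    simp only [S, g, indicator, mem_Iio]
    split_ifs <;> ring
  have hg : IntegrableOn ((Iio x₁).indicator g) (Ioi 0) := by
    refine (integrableOn_indicator_iff measurableSet_Iio).mpr ?_
    refine (Continuous.integrableOn_Icc (a := 0) (b := x₁) ?_).mono_set
      fun t ⟨ht1, ht0⟩ => ⟨le_of_lt ht0, le_of_lt ht1⟩
    refine (Continuous.div (by fun_prop) (by fun_prop) fun t => by positivity).mul ?_
    unfold V
    fun_prop
  simp_rw [hsplit]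
  rw [integral_sub integrableOn_Ioi_pow_eleven_div (hg.const_mul _), integral_const_mul,
    setIntegral_indicator measurableSet_Iio, Ioi_inter_Iio, ← integral_Ioc_eq_integral_Ioo,
    ← intervalIntegral.integral_of_le x₁_pos.le, integral_Ioi_pow_eleven_div]
  have := mul_neg_of_pos_of_neg (by positivity : 0 < 6 * ε) integral_weight_mul_V_neg
  linarith

theorem S_counterexample (ε : ℝ) (hε0 : 0 < ε) (hε1 : ε ≤ 1) :
    (∀ x ∈ Set.Ici (0:ℝ), 0 ≤ S ε x) ∧
    MonotoneOn (S ε) (Set.Ici 0) ∧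
    ConvexOn ℝ Set.univ (fun x => S ε (Real.exp x)) ∧
    (∀ t : ℝ, 0 ≤ t → (∫ x in (0:ℝ)..1, S ε (t * x) * x) ≤ t ^ 4) ∧
    3 * π / 8 < ∫ t in Set.Ioi (0:ℝ), S ε t * t^7 / (1 + t^8)^2 := by
  have hmono := S_monotoneOn hε0.le hε1
  refine ⟨fun x hx => ?_, hmono, convexOn_S_comp_exp hε0.le hε1,
    fun t ht => integral_S_mul_le hε0.le ht, three_pi_div_eight_lt_integral_S hε0⟩
  simpa [S, x₁_pos] using hmono self_mem_Ici hx hx
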